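/- Let a > 0, let f : [0,a] → ℝ be a 1-Lipschitz function and let (a_n) be a good partition of [0,a]. Suppose that τ > 0, K > 1 is an integer, (1+τ)^K < 2, and a_{n−K}/a_n ≥ 2 for every n ≥ K. Then T_τ(f) < T(f,(a_n)) + 6K(K−1)τa. -/

import Mathlib

open Set

/-- A good partition of `[0,a]`: a strictly decreasing sequence `a = a₀ > a₁ > … > 0`
tending to `0` with `a_{n-1}/a_n ≤ 2`. -/
def IsGoodPartition (a : ℝ) (u : ℕ → ℝ) : Prop :=
  u 0 = a ∧ (∀ n, 0 < u n) ∧ (∀ n, u (n + 1) < u n) ∧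
    Filter.Tendsto u Filter.atTop (nhds 0) ∧ ∀ n, u n ≤ 2 * u (n + 1)

/-- A `τ`-good partition: a good partition with `a_{n-1}/a_n ≥ 1 + τ`. -/
def IsTauGoodPartition (τ a : ℝ) (u : ℕ → ℝ) : Prop :=
  IsGoodPartition a u ∧ ∀ n, (1 + τ) * u (n + 1) ≤ u n

/-- The total drop of `f` according to the partition `(a_n)`:
`T(f,(a_n)) = Σ_{n≥1} (f(a_n) − min_{[a_n, a_{n-1}]} f)`. -/
noncomputable def totalDrop (f : ℝ → ℝ) (u : ℕ → ℝ) : ℝ :=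
  ∑' n : ℕ, (f (u (n + 1)) - sInf (f '' Set.Icc (u (n + 1)) (u n)))

/-- `T(f)`: the infimum of the total drop over all good partitions of `[0,a]`. -/
noncomputable def drop (a : ℝ) (f : ℝ → ℝ) : ℝ :=
  sInf {t | ∃ u, IsGoodPartition a u ∧ t = totalDrop f u}

/-- `T_τ(f)`: the infimum of the total drop over all `τ`-good partitions of `[0,a]`. -/
noncomputable def dropTau (τ a : ℝ) (f : ℝ → ℝ) : ℝ :=
  sInf {t | ∃ u, IsTauGoodPartition τ a u ∧ t = totalDrop f u}

/-!
Replace `u` by its largest `τ`-good minorant `v`: `v₀ = a`, `v_{n+1} = min(u_{n+1}, v_n/(1+τ))`.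
Every `v_n` equals `u_m/(1+τ)^(n-m)` for some `m ≤ n`; since `u` halves every `K` steps while
`(1+τ)^K < 2`, this gives `u_n ≤ (1+τ)^(K-1) v_n`, hence `u_n - v_n ≤ 2(K-1)τ u_n`.
For a `1`-Lipschitz `f`, moving the left end of an interval by `δ` changes its drop by at most
`δ`, so `T(f,v) ≤ T(f,u) + 2(K-1)τ Σ_{n≥1} u_n`, and the halving gives `Σ_{n≥1} u_n ≤ 2K a`.
-/

theorem LipschitzOnWith.le_add_sub_of_le {f : ℝ → ℝ} {s : Set ℝ} (hf : LipschitzOnWith 1 f s)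
    {x y : ℝ} (hx : x ∈ s) (hy : y ∈ s) (hxy : x ≤ y) : f x ≤ f y + (y - x) := by
  simpa [Real.dist_eq, abs_of_nonpos (sub_nonpos.2 hxy)] using hf.le_add_mul hx hy

theorem one_add_pow_sub_one_le {x : ℝ} (hx : 0 ≤ x) (n : ℕ) :
    (1 + x) ^ n - 1 ≤ x * n * (1 + x) ^ (n - 1) := by
  have h := abs_pow_sub_pow_le (1 + x) 1 n
  rw [one_pow, add_sub_cancel_left, abs_one, abs_of_nonneg hx,
    abs_of_nonneg (by linarith : 0 ≤ 1 + x), max_eq_left (by linarith)] at h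
  exact (le_abs_self _).trans h

/-- The summand of `totalDrop`:
`totalDrop f u` unfolds to `∑' n, intervalDrop f (u (n + 1)) (u n)`. -/
noncomputable def intervalDrop (f : ℝ → ℝ) (b c : ℝ) : ℝ :=
  f b - sInf (f '' Icc b c)

section intervalDrop

variable {f : ℝ → ℝ} {b c : ℝ}

theorem intervalDrop_nonneg (hf : ContinuousOn f (Icc b c)) (hbc : b ≤ c) :
    0 ≤ intervalDrop f b c :=
  sub_nonneg.2 <| csInf_le (isCompact_Icc.bddBelow_image hf) (mem_image_of_mem f ⟨le_rfl, hbc⟩)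

theorem intervalDrop_le (hf : LipschitzOnWith 1 f (Icc b c)) (hbc : b ≤ c) :
    intervalDrop f b c ≤ c - b := by
  have : f b - (c - b) ≤ sInf (f '' Icc b c) :=
    le_csInf ((nonempty_Icc.2 hbc).image f) <| forall_mem_image.2 fun y hy => by
      linarith [hf.le_add_sub_of_le ⟨le_rfl, hbc⟩ hy hy.1, hy.2]
  unfold intervalDrop
  linarith

theorem intervalDrop_le_add {b' c' : ℝ} (hf : LipschitzOnWith 1 f (Icc b c'))
    (hbc : b ≤ c) (hcc' : c ≤ c') (hbb' : b ≤ b') (hb'c' : b' ≤ c') :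
    intervalDrop f b c ≤ intervalDrop f b' c' + (b' - b) := by
  have hb : b ∈ Icc b c' := ⟨le_rfl, hbc.trans hcc'⟩
  have hsub : Icc b' c' ⊆ Icc b c' := Icc_subset_Icc_left hbb'
  have hbdd : BddBelow (f '' Icc b c') := isCompact_Icc.bddBelow_image hf.continuousOn
  have hmono : sInf (f '' Icc b c') ≤ sInf (f '' Icc b c) :=
    csInf_le_csInf hbdd ((nonempty_Icc.2 hbc).image f) (image_mono (Icc_subset_Icc_right hcc'))
  have hdrop := intervalDrop_nonneg (hf.mono hsub).continuousOn hb'c'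
  -- on `[b, b']` use the Lipschitz bound at `b`, on `[b', c']` the minimum over `[b', c']`
  have hlow : f b - (b' - b) - intervalDrop f b' c' ≤ sInf (f '' Icc b c') := by
    refine le_csInf ((nonempty_Icc.2 (hbc.trans hcc')).image f) (forall_mem_image.2 fun y hy => ?_)
    rcases le_total y b' with hyb' | hb'y
    · linarith [hf.le_add_sub_of_le hb hy hy.1]
    · have hmin := csInf_le (hbdd.mono (image_mono hsub)) (mem_image_of_mem f ⟨hb'y, hy.2⟩)
      have hlip := hf.le_add_sub_of_le hb ⟨hbb', hb'c'⟩ hbb'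
      unfold intervalDrop
      linarith
  unfold intervalDrop at *
  linarith

end intervalDrop

namespace IsGoodPartition

variable {a : ℝ} {u : ℕ → ℝ}

theorem antitone (hu : IsGoodPartition a u) : Antitone u :=
  antitone_nat_of_succ_le fun n => (hu.2.2.1 n).le

theorem mem_Icc (hu : IsGoodPartition a u) (n : ℕ) : u n ∈ Icc 0 a :=
  ⟨(hu.2.1 n).le, hu.1 ▸ hu.antitone n.zero_le⟩

theorem Icc_subset (hu : IsGoodPartition a u) (n : ℕ) : Icc (u (n + 1)) (u n) ⊆ Icc 0 a :=
  Icc_subset_Icc (hu.mem_Icc _).1 (hu.mem_Icc _).2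

end IsGoodPartition

section totalDrop

variable {f : ℝ → ℝ} {a : ℝ} {u v : ℕ → ℝ}

theorem totalDrop_nonneg (hf : ContinuousOn f (Icc 0 a)) (hu : IsGoodPartition a u) :
    0 ≤ totalDrop f u :=
  tsum_nonneg fun n => intervalDrop_nonneg (hf.mono (hu.Icc_subset n)) (hu.2.2.1 n).le

theorem dropTau_le_totalDrop {τ : ℝ} (hf : ContinuousOn f (Icc 0 a))
    (hv : IsTauGoodPartition τ a v) : dropTau τ a f ≤ totalDrop f v :=
  csInf_le ⟨0, fun _ ⟨_, hw, ht⟩ => ht ▸ totalDrop_nonneg hf hw.1⟩ ⟨v, hv, rfl⟩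

theorem summable_intervalDrop (hf : LipschitzOnWith 1 f (Icc 0 a)) (hu : IsGoodPartition a u) :
    Summable fun n => intervalDrop f (u (n + 1)) (u n) := by
  refine summable_of_sum_range_le (c := u 0)
    (fun n => intervalDrop_nonneg (hf.continuousOn.mono (hu.Icc_subset n)) (hu.2.2.1 n).le)
    fun n => ?_
  calc ∑ i ∈ Finset.range n, intervalDrop f (u (i + 1)) (u i)
      ≤ ∑ i ∈ Finset.range n, (u i - u (i + 1)) :=
        Finset.sum_le_sum fun i _ => intervalDrop_le (hf.mono (hu.Icc_subset i)) (hu.2.2.1 i).le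
    _ = u 0 - u n := Finset.sum_range_sub' u n
    _ ≤ u 0 := sub_le_self _ (hu.2.1 n).le

theorem totalDrop_le_add_tsum_sub (hf : LipschitzOnWith 1 f (Icc 0 a))
    (hu : IsGoodPartition a u) (hv : IsGoodPartition a v) (hvu : ∀ n, v n ≤ u n)
    (hs : Summable fun n => u (n + 1) - v (n + 1)) :
    totalDrop f v ≤ totalDrop f u + ∑' n, (u (n + 1) - v (n + 1)) :=
  calc totalDrop f v = ∑' n, intervalDrop f (v (n + 1)) (v n) := rfl
    _ ≤ ∑' n, (intervalDrop f (u (n + 1)) (u n) + (u (n + 1) - v (n + 1))) :=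
      (summable_intervalDrop hf hv).tsum_le_tsum
        (fun n => intervalDrop_le_add (hf.mono (Icc_subset_Icc (hv.mem_Icc _).1 (hu.mem_Icc n).2))
          (hv.2.2.1 n).le (hvu n) (hvu (n + 1)) (hu.2.2.1 n).le)
        ((summable_intervalDrop hf hu).add hs)
    _ = totalDrop f u + ∑' n, (u (n + 1) - v (n + 1)) := (summable_intervalDrop hf hu).tsum_add hs

end totalDrop

section halving

variable {w : ℕ → ℝ} {K : ℕ}

theorem sum_range_add_le (hw : Antitone w) (hw0 : ∀ i, 0 ≤ w i) (hK : 0 < K)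
    (h2 : ∀ i, 2 * w (i + K) ≤ w i) (n m : ℕ) :
    ∑ i ∈ Finset.range n, w (i + m) ≤ 2 * K * w m := by
  induction n using Nat.strong_induction_on generalizing m with
  | _ n ih =>
  have hblock : ∀ k ≤ K, ∑ i ∈ Finset.range k, w (i + m) ≤ K * w m := fun k hk =>
    calc ∑ i ∈ Finset.range k, w (i + m) ≤ ∑ i ∈ Finset.range k, w m :=
          Finset.sum_le_sum fun i _ => hw (Nat.le_add_left m i)
      _ = k * w m := by simp
      _ ≤ K * w m := by gcongr; exact hw0 m
  have hKw : 2 * K * w (m + K) ≤ K * w m := by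
    nlinarith [h2 m, (Nat.cast_nonneg K : (0 : ℝ) ≤ K)]
  rcases le_or_gt n K with hn | hn
  · nlinarith [hblock n hn, hw0 m, (Nat.cast_nonneg K : (0 : ℝ) ≤ K)]
  · obtain ⟨n', rfl⟩ := Nat.exists_eq_add_of_le hn.le
    have htail : ∑ i ∈ Finset.range n', w (K + i + m) ≤ 2 * K * w (m + K) :=
      (Finset.sum_congr rfl fun i _ => by rw [show K + i + m = i + (m + K) by omega]).trans_le
        (ih n' (by omega) (m + K))
    rw [Finset.sum_range_add]
    linarith [hblock K le_rfl]

theorem pow_mul_add_le {ρ : ℝ} (hρ : 1 ≤ ρ) (hρK : ρ ^ K ≤ 2) (hw : Antitone w)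
    (hw0 : ∀ i, 0 ≤ w i) (hK : 0 < K) (h2 : ∀ i, 2 * w (i + K) ≤ w i) (d m : ℕ) :
    ρ ^ d * w (m + d) ≤ ρ ^ (K - 1) * w m := by
  have hρ0 : 0 ≤ ρ := zero_le_one.trans hρ
  induction d using Nat.strong_induction_on generalizing m with
  | _ d ih =>
  rcases lt_or_ge d K with hd | hd
  · exact mul_le_mul (pow_le_pow_right₀ hρ (by omega)) (hw (Nat.le_add_right m d)) (hw0 _)
      (pow_nonneg hρ0 _)
  · obtain ⟨d, rfl⟩ := Nat.exists_eq_add_of_le hd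
    calc ρ ^ (K + d) * w (m + (K + d)) = ρ ^ K * (ρ ^ d * w (m + K + d)) := by
          rw [pow_add, ← add_assoc]; ring
      _ ≤ ρ ^ K * (ρ ^ (K - 1) * w (m + K)) :=
          mul_le_mul_of_nonneg_left (ih d (by omega) (m + K)) (pow_nonneg hρ0 _)
      _ ≤ 2 * (ρ ^ (K - 1) * w (m + K)) := by
          gcongr; exact mul_nonneg (pow_nonneg hρ0 _) (hw0 _)
      _ = ρ ^ (K - 1) * (2 * w (m + K)) := by ring
      _ ≤ ρ ^ (K - 1) * w m := by gcongr; exact h2 m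

end halving

noncomputable def tauMinorant (τ : ℝ) (u : ℕ → ℝ) : ℕ → ℝ
  | 0 => u 0
  | n + 1 => min (u (n + 1)) (tauMinorant τ u n / (1 + τ))

section tauMinorant

variable {τ : ℝ} {u : ℕ → ℝ}

theorem tauMinorant_le (n : ℕ) : tauMinorant τ u n ≤ u n := by
  cases n with
  | zero => exact le_rfl
  | succ n => exact min_le_left _ _

theorem tauMinorant_pos (hτ : 0 ≤ τ) (hu : ∀ n, 0 < u n) (n : ℕ) : 0 < tauMinorant τ u n := by
  induction n with
  | zero => exact hu 0
  | succ n ih => exact lt_min (hu _) (div_pos ih (by linarith))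

theorem one_add_mul_tauMinorant_succ_le (hτ : 0 ≤ τ) (n : ℕ) :
    (1 + τ) * tauMinorant τ u (n + 1) ≤ tauMinorant τ u n :=
  (le_div_iff₀' (by linarith)).1 (min_le_right _ _)

theorem exists_pow_mul_tauMinorant_eq (hτ : 0 ≤ τ) (n : ℕ) :
    ∃ m ≤ n, (1 + τ) ^ (n - m) * tauMinorant τ u n = u m := by
  induction n with
  | zero => exact ⟨0, le_rfl, by simp [tauMinorant]⟩
  | succ n ih =>
    rcases min_choice (u (n + 1)) (tauMinorant τ u n / (1 + τ)) with h | h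
    · exact ⟨n + 1, le_rfl, by simp [tauMinorant, h]⟩
    · obtain ⟨m, hmn, hm⟩ := ih
      refine ⟨m, hmn.trans n.le_succ, ?_⟩
      rw [tauMinorant, h, show n + 1 - m = n - m + 1 by omega, pow_succ, ← hm]
      field_simp

theorem le_pow_mul_tauMinorant {K : ℕ} (hτ : 0 ≤ τ) (hτK : (1 + τ) ^ K ≤ 2) (hu : Antitone u)
    (hu0 : ∀ n, 0 ≤ u n) (hK : 0 < K) (h2 : ∀ n, 2 * u (n + K) ≤ u n) (n : ℕ) :
    u n ≤ (1 + τ) ^ (K - 1) * tauMinorant τ u n := by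
  obtain ⟨m, hmn, hm⟩ := exists_pow_mul_tauMinorant_eq (u := u) hτ n
  have h := pow_mul_add_le (by linarith) hτK hu hu0 hK h2 (n - m) m
  rw [Nat.add_sub_cancel' hmn] at h
  refine le_of_mul_le_mul_left (h.trans_eq ?_) (pow_pos (by linarith) (n - m))
  rw [← hm]
  ring

theorem sub_tauMinorant_le {K : ℕ} (hτ : 0 ≤ τ) (hτK : (1 + τ) ^ K ≤ 2) (hu : Antitone u)
    (hu0 : ∀ n, 0 ≤ u n) (hK : 0 < K) (h2 : ∀ n, 2 * u (n + K) ≤ u n) (n : ℕ) :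
    u n - tauMinorant τ u n ≤ 2 * (K - 1) * τ * u n := by
  have hpow : (1 + τ) ^ (K - 1) - 1 ≤ 2 * (K - 1) * τ := by
    have h := one_add_pow_sub_one_le hτ (K - 1)
    have hle : (1 + τ) ^ (K - 1 - 1) ≤ 2 :=
      (pow_le_pow_right₀ (by linarith) (by omega)).trans hτK
    rw [Nat.cast_pred hK] at h
    have hτK1 : 0 ≤ τ * ((K : ℝ) - 1) :=
      mul_nonneg hτ (sub_nonneg.2 (Nat.one_le_cast.2 hK))
    linarith [mul_le_mul_of_nonneg_left hle hτK1]
  have hv := le_pow_mul_tauMinorant hτ hτK hu hu0 hK h2 n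
  have hvu : tauMinorant τ u n ≤ u n := tauMinorant_le n
  have hv0 : 0 ≤ (1 + τ) ^ (K - 1) - 1 := sub_nonneg.2 (one_le_pow₀ (by linarith))
  linarith [mul_le_mul_of_nonneg_left hvu hv0, mul_le_mul_of_nonneg_right hpow (hu0 n)]

theorem isTauGoodPartition_tauMinorant {a : ℝ} (hτ : 0 < τ) (hτ1 : τ ≤ 1)
    (hu : IsGoodPartition a u) : IsTauGoodPartition τ a (tauMinorant τ u) := by
  have hpos := tauMinorant_pos hτ.le hu.2.1
  have hstep := one_add_mul_tauMinorant_succ_le (u := u) hτ.le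
  refine ⟨⟨hu.1, hpos, fun n => ?_, squeeze_zero (fun n => (hpos n).le) tauMinorant_le
    hu.2.2.2.1, fun n => ?_⟩, hstep⟩
  · nlinarith [hstep n, hpos (n + 1)]
  · rcases min_choice (u (n + 1)) (tauMinorant τ u n / (1 + τ)) with h | h
    · rw [tauMinorant, h]
      exact (tauMinorant_le n).trans (hu.2.2.2.2 n)
    · rw [tauMinorant, h, ← mul_div_assoc, le_div_iff₀ (by linarith)]
      nlinarith [hpos n]

theorem summable_sub_tauMinorant_and_tsum_le {K : ℕ} (hτ : 0 ≤ τ) (hτK : (1 + τ) ^ K ≤ 2)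
    (hu : Antitone u) (hu0 : ∀ n, 0 ≤ u n) (hK : 0 < K) (h2 : ∀ n, 2 * u (n + K) ≤ u n) :
    (Summable fun n => u (n + 1) - tauMinorant τ u (n + 1)) ∧
      ∑' n, (u (n + 1) - tauMinorant τ u (n + 1)) ≤ 2 * (K - 1) * τ * (2 * K * u 1) := by
  have hgap := sub_tauMinorant_le hτ hτK hu hu0 hK h2
  have hsum : ∀ n, ∑ i ∈ Finset.range n, u (i + 1) ≤ 2 * K * u 1 :=
    (sum_range_add_le hu hu0 hK h2 · 1)
  have hs : Summable fun n => u (n + 1) := summable_of_sum_range_le (fun _ => hu0 _) hsum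
  have hs' : Summable fun n => u (n + 1) - tauMinorant τ u (n + 1) :=
    (hs.mul_left _).of_nonneg_of_le (fun _ => sub_nonneg.2 (tauMinorant_le _)) fun _ => hgap _
  refine ⟨hs', ?_⟩
  calc ∑' n, (u (n + 1) - tauMinorant τ u (n + 1)) ≤ ∑' n, 2 * (K - 1) * τ * u (n + 1) :=
        hs'.tsum_le_tsum (fun _ => hgap _) (hs.mul_left _)
    _ = 2 * (K - 1) * τ * ∑' n, u (n + 1) := tsum_mul_left
    _ ≤ 2 * (K - 1) * τ * (2 * K * u 1) := by
        have : (0 : ℝ) ≤ K - 1 := sub_nonneg.2 (Nat.one_le_cast.2 hK)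
        gcongr
        exact Real.tsum_le_of_sum_range_le (fun _ => hu0 _) hsum

end tauMinorant

theorem statement15_general (a τ : ℝ) (hτ : 0 < τ) (K : ℕ) (hK : 1 < K)
    (hτK : (1 + τ) ^ K < 2) (f : ℝ → ℝ) (hf : LipschitzOnWith 1 f (Set.Icc 0 a))
    (u : ℕ → ℝ) (hu : IsGoodPartition a u) (h2 : ∀ n, 2 * u (n + K) ≤ u n) :
    dropTau τ a f < totalDrop f u + 6 * (K : ℝ) * ((K : ℝ) - 1) * τ * a := by
  have hτ1 : τ ≤ 1 := by
    linarith [le_self_pow₀ (by linarith : (1 : ℝ) ≤ 1 + τ) (by omega : K ≠ 0)]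
  have hv := isTauGoodPartition_tauMinorant hτ hτ1 hu
  obtain ⟨hs, hsum⟩ := summable_sub_tauMinorant_and_tsum_le hτ.le hτK.le hu.antitone
    (fun n => (hu.2.1 n).le) (by omega) h2
  calc dropTau τ a f ≤ totalDrop f (tauMinorant τ u) := dropTau_le_totalDrop hf.continuousOn hv
    _ ≤ totalDrop f u + ∑' n, (u (n + 1) - tauMinorant τ u (n + 1)) :=
      totalDrop_le_add_tsum_sub hf hu hv.1 tauMinorant_le hs
    _ ≤ totalDrop f u + 2 * (K - 1) * τ * (2 * K * u 1) := add_le_add le_rfl hsum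
    _ < totalDrop f u + 6 * (K : ℝ) * ((K : ℝ) - 1) * τ * a := by
      have hKτ : 0 < (K : ℝ) * ((K : ℝ) - 1) * τ := by
        have : (1 : ℝ) < K := by exact_mod_cast hK
        have : (0 : ℝ) < K - 1 := by linarith
        positivity
      have ha : 0 < a := hu.1 ▸ hu.2.1 0
      nlinarith [mul_le_mul_of_nonneg_left (hu.mem_Icc 1).2 hKτ.le, mul_pos hKτ ha]

/-- **Lemma.** Let `f : [0,a] → ℝ` be `1`-Lipschitz and `(a_n)` a good partition of `[0,a]`.
If `τ > 0`, `K > 1` is an integer with `(1+τ)^K < 2` and `a_{n-K}/a_n ≥ 2` for all `n ≥ K`,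
then `T_τ(f) < T(f,(a_n)) + 6K(K−1)τa`. -/
theorem statement15 (a τ : ℝ) (ha : 0 < a) (hτ : 0 < τ) (K : ℕ) (hK : 1 < K)
    (hτK : (1 + τ) ^ K < 2) (f : ℝ → ℝ) (hf : LipschitzOnWith 1 f (Set.Icc 0 a))
    (u : ℕ → ℝ) (hu : IsGoodPartition a u) (h2 : ∀ n, 2 * u (n + K) ≤ u n) :
    dropTau τ a f < totalDrop f u + 6 * (K : ℝ) * ((K : ℝ) - 1) * τ * a :=
  statement15_general a τ hτ K hK hτK f hf u hu h2
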